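/- arXiv:2602.16654 — 3 statements merged into one kernel-verified Lean document; each statement's English description precedes it below -/
import Mathlib

section
/- Let $(a_n)_{n\ge1}$ be a sequence of real numbers with $0 < a_n < A/n$ for all $n$ and some constant $A>0$. Then there exists a nondecreasing sequence of natural numbers $n_1 \le n_2 \le n_3 \le \cdots$ such that $\sum_{k=1}^\infty a_{n_k} < \infty$ while $\sum_{k=1}^\infty n_k a_{n_k} = \infty$. -/
/-! Use only the dyadic indices `2 ^ m`, and repeat `2 ^ m` exactly `r m = ⌈(2 ^ m a_{2^m})⁻¹⌉`
times. Block `m` then contributes at least `1` to `∑ n_k a_{n_k}`, so that series diverges,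
while it contributes `r m a_{2^m} < (1 + 2 ^ m a_{2^m}) / 2 ^ m < (1 + A) / 2 ^ m` to
`∑ a_{n_k}`, which therefore converges. -/

open Finset

namespace Block

variable (r : ℕ → ℕ)

/-- `ℕ` is cut into consecutive blocks `[start r m, start r (m + 1))` of length `r m`, and
`index r k` is the block containing `k`. -/
def start (M : ℕ) : ℕ := ∑ m ∈ range M, r m

def index (k : ℕ) : ℕ := Nat.findGreatest (fun M => start r M ≤ k) k

theorem start_succ (M : ℕ) : start r (M + 1) = start r M + r M :=
  sum_range_succ r M

theorem monotone_index : Monotone (index r) := fun _ _ hij =>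
  Nat.findGreatest_mono (fun _ hm => hm.trans hij) hij

variable {r}

theorem strictMono_start (hr : ∀ m, 0 < r m) : StrictMono (start r) :=
  strictMono_nat_of_lt_succ fun M => by rw [start_succ]; exact Nat.lt_add_of_pos_right (hr M)

theorem index_start_add (hr : ∀ m, 0 < r m) {M i : ℕ} (hi : i < r M) :
    index r (start r M + i) = M := by
  refine Nat.findGreatest_eq_iff.2 ⟨?_, fun _ => Nat.le_add_right _ _, fun n hMn _ hn => ?_⟩
  · exact ((strictMono_start hr).id_le M).trans (Nat.le_add_right _ _)
  · have := (strictMono_start hr).monotone (Nat.succ_le_of_lt hMn)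
    rw [start_succ] at this
    omega

theorem sum_range_start_comp_index (hr : ∀ m, 0 < r m) {β : Type*} [AddCommMonoid β]
    (G : ℕ → β) (M : ℕ) :
    ∑ k ∈ range (start r M), G (index r k) = ∑ m ∈ range M, r m • G m := by
  induction M with
  | zero => simp [start]
  | succ M ih =>
    have hblock : ∑ i ∈ range (r M), G (index r (start r M + i)) = ∑ _i ∈ range (r M), G M :=
      sum_congr rfl fun i hi => by rw [index_start_add hr (mem_range.1 hi)]
    rw [start_succ, sum_range_add, ih, sum_range_succ, hblock, sum_const, card_range]

theorem summable_comp_index_iff (hr : ∀ m, 0 < r m) {G : ℕ → ℝ} (hG : ∀ m, 0 ≤ G m) :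
    Summable (fun k => G (index r k)) ↔ Summable (fun m => r m * G m) := by
  have hsum (M : ℕ) : ∑ k ∈ range (start r M), G (index r k) = ∑ m ∈ range M, r m * G m := by
    simp only [sum_range_start_comp_index hr, nsmul_eq_mul]
  constructor
  · intro h
    refine summable_of_sum_range_le (c := ∑' k, G (index r k)) (fun m => mul_nonneg (Nat.cast_nonneg _) (hG m)) fun M => ?_
    rw [← hsum]
    exact h.sum_le_tsum _ fun k _ => hG _
  · intro h
    refine summable_of_sum_range_le (c := ∑' m, r m * G m) (fun k => hG _) fun n => ?_
    calc ∑ k ∈ range n, G (index r k)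
        ≤ ∑ k ∈ range (start r n), G (index r k) :=
          sum_le_sum_of_subset_of_nonneg (range_subset_range.2 ((strictMono_start hr).id_le n))
            fun k _ _ => hG _
      _ = ∑ m ∈ range n, r m * G m := hsum n
      _ ≤ ∑' m, r m * G m := h.sum_le_tsum _ fun m _ => mul_nonneg (Nat.cast_nonneg _) (hG m)

end Block

theorem one_le_ceil_inv_mul {x : ℝ} (hx : 0 < x) : 1 ≤ ⌈x⁻¹⌉₊ * x := by
  calc (1 : ℝ) = x⁻¹ * x := (inv_mul_cancel₀ hx.ne').symm
    _ ≤ ⌈x⁻¹⌉₊ * x := mul_le_mul_of_nonneg_right (Nat.le_ceil _) hx.le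

theorem ceil_inv_mul_lt {x : ℝ} (hx : 0 < x) : ⌈x⁻¹⌉₊ * x < 1 + x := by
  calc (⌈x⁻¹⌉₊ : ℝ) * x < (x⁻¹ + 1) * x :=
        mul_lt_mul_of_pos_right (Nat.ceil_lt_add_one (inv_nonneg.2 hx.le)) hx
    _ = 1 + x := by rw [add_mul, inv_mul_cancel₀ hx.ne', one_mul]

theorem stmt_0_general (a : ℕ → ℝ) (A : ℝ)
    (ha : ∀ n : ℕ, 1 ≤ n → 0 < a n ∧ a n < A / n) :
    ∃ nk : ℕ → ℕ, Monotone nk ∧ (∀ k, 1 ≤ nk k) ∧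
      Summable (fun k => a (nk k)) ∧
      ¬ Summable (fun k => (nk k : ℝ) * a (nk k)) := by
  set b : ℕ → ℝ := fun m => 2 ^ m * a (2 ^ m)
  have ha_pos (m : ℕ) : 0 < a (2 ^ m) := (ha _ Nat.one_le_two_pow).1
  have hb_pos (m : ℕ) : 0 < b m := mul_pos (by positivity) (ha_pos m)
  have hb_lt (m : ℕ) : b m < A := by
    have := (ha (2 ^ m) Nat.one_le_two_pow).2
    rw [Nat.cast_pow, Nat.cast_ofNat, lt_div_iff₀' (by positivity)] at this
    exact this
  set r : ℕ → ℕ := fun m => ⌈(b m)⁻¹⌉₊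
  have hr (m : ℕ) : 0 < r m := Nat.ceil_pos.2 (inv_pos.2 (hb_pos m))
  refine ⟨fun k => 2 ^ Block.index r k, (pow_right_mono₀ one_le_two).comp (Block.monotone_index r),
    fun k => Nat.one_le_two_pow, ?_, ?_⟩
  · rw [Block.summable_comp_index_iff hr fun m => (ha_pos m).le]
    refine (summable_geometric_two.mul_left (1 + A)).of_nonneg_of_le
      (fun m => mul_nonneg (Nat.cast_nonneg _) (ha_pos m).le) fun m => ?_
    have h2m : (0 : ℝ) < 2 ^ m := by positivity
    calc (r m : ℝ) * a (2 ^ m) = r m * b m / 2 ^ m := by simp only [b]; field_simp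
      _ ≤ (1 + A) / 2 ^ m := by
          gcongr; linarith [ceil_inv_mul_lt (hb_pos m), hb_lt m]
      _ = (1 + A) * (1 / 2) ^ m := by rw [one_div_pow, mul_one_div]
  · refine (Block.summable_comp_index_iff hr (G := fun m => ((2 ^ m : ℕ) : ℝ) * a (2 ^ m))
      fun m => mul_nonneg (Nat.cast_nonneg _) (ha_pos m).le).not.2 fun h => ?_
    have := ge_of_tendsto' h.tendsto_atTop_zero fun m => by
      push_cast; exact one_le_ceil_inv_mul (hb_pos m)
    norm_num at this

/-- Lemma 2.1: from a positive sequence dominated by `A/n` one can extract a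
nondecreasing sequence of indices whose terms sum, but weighted by the index diverge. -/
theorem stmt_0 (a : ℕ → ℝ) (A : ℝ) (hA : 0 < A)
    (ha : ∀ n : ℕ, 1 ≤ n → 0 < a n ∧ a n < A / n) :
    ∃ nk : ℕ → ℕ, Monotone nk ∧ (∀ k, 1 ≤ nk k) ∧
      Summable (fun k => a (nk k)) ∧
      ¬ Summable (fun k => (nk k : ℝ) * a (nk k)) :=
  stmt_0_general a A ha
end

section
/- Let $(X,\mathcal{B},\mu)$ be a probability space and let $\mathcal{T}$ be an ergodic family of measure-preserving transformations of $X$ (i.e., any set invariant under every $\tau \in \mathcal{T}$ has measure $0$ or $1$), satisfying the mixing property: for all measurable $A, B$ and all $\theta > 1$ there exists $\tau \in \mathcal{T}$ with $\mu(B \cap \tau^{-1}[A]) \le \theta\, \mu(A)\mu(B)$. Let $(A_n)$ be measurable sets with $\sum_{n=1}^\infty \mu(A_n) = \infty$. Then there exists a sequence $(\tau_n) \subseteq \mathcal{T}$ such that for every $M$, $\mu\left(\bigcup_{n \ge M} \tau_n^{-1}[A_n]\right) = 1$; equivalently, $\tau_n(x) \in A_n$ for infinitely many $n$, for almost every $x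 \in X$. -/
/-!
Fix a block of indices `[m, N)`. Choosing the `τ_k` of the block one at a time, each time mixing
`(A_k)ᶜ` against the set of points that have missed every `A_i` so far, gives
`μ(⋂_{m ≤ k < N} τ_k⁻¹ (A_k)ᶜ) ≤ θ^(N-m) ∏ (1 - μ A_k) ≤ θ^(N-m) exp(-∑ μ A_k)`.
Taking `θ = exp (1/(N-m+1))` and `N` so large that the divergent sum `∑_{m ≤ k < N} μ A_k`
exceeds `1 + log (1/ε)` makes this at most `ε`. Concatenating consecutive blocks with
`ε_j = 1/(j+1)` then gives a single sequence whose tails all miss the `A_n` only on a null set.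
-/

open MeasureTheory Filter Finset Real

theorem Real.prod_one_sub_le_exp_neg_sum {ι : Type*} (s : Finset ι) {a : ι → ℝ}
    (ha : ∀ i ∈ s, a i ≤ 1) : ∏ i ∈ s, (1 - a i) ≤ exp (-∑ i ∈ s, a i) := by
  rw [← sum_neg_distrib, exp_sum]
  exact prod_le_prod (fun i hi => sub_nonneg.2 (ha i hi)) fun i _ => one_sub_le_exp_neg (a i)

theorem tendsto_sum_Ico_atTop_of_not_summable {a : ℕ → ℝ} (ha : ∀ n, 0 ≤ a n)
    (h : ¬Summable a) (m : ℕ) : Tendsto (fun N => ∑ k ∈ Ico m N, a k) atTop atTop := by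
  refine (tendsto_atTop_add_const_right atTop (-∑ k ∈ range m, a k)
    ((not_summable_iff_tendsto_nat_atTop_of_nonneg ha).1 h)).congr' ?_
  filter_upwards [eventually_ge_atTop m] with N hN
  rw [sum_Ico_eq_sub _ hN, sub_eq_add_neg]

theorem StrictMono.findGreatest_le_eq {b : ℕ → ℕ} (hb : StrictMono b) {j n : ℕ}
    (hj : b j ≤ n) (hn : n < b (j + 1)) : Nat.findGreatest (fun i => b i ≤ n) n = j := by
  refine Nat.findGreatest_eq_iff.2 ⟨hb.le_apply.trans hj, fun _ => hj, fun i hji _ hi => ?_⟩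
  have := hb.monotone (show j + 1 ≤ i from hji)
  omega

theorem MeasureTheory.not_summable_measureReal_of_tsum_eq_top {X : Type*} [MeasurableSpace X]
    {μ : Measure X} [IsFiniteMeasure μ] {A : ℕ → Set X} (h : ∑' n, μ (A n) = ⊤) :
    ¬Summable fun n => μ.real (A n) := fun hs => by
  simpa [measureReal_def, h] using ENNReal.ofReal_tsum_of_nonneg (fun n => measureReal_nonneg) hs

def IsMixingFamily {X : Type*} [MeasurableSpace X] (μ : Measure X) (𝒯 : Set (X → X)) : Prop :=
  ∀ A B : Set X, MeasurableSet A → MeasurableSet B → ∀ θ : ℝ, 1 < θ →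
    ∃ τ ∈ 𝒯, μ (B ∩ τ ⁻¹' A) ≤ ENNReal.ofReal θ * μ A * μ B

namespace IsMixingFamily

variable {X : Type*} [MeasurableSpace X] {μ : Measure X} {𝒯 : Set (X → X)}

theorem nonempty (h : IsMixingFamily μ 𝒯) : 𝒯.Nonempty :=
  let ⟨τ, hτ, _⟩ := h ∅ ∅ .empty .empty 2 one_lt_two
  ⟨τ, hτ⟩

theorem exists_measureReal_inter_preimage_le [IsFiniteMeasure μ] (h : IsMixingFamily μ 𝒯)
    {A : Set X} (hA : MeasurableSet A) (B : Set X) {θ : ℝ} (hθ : 1 < θ) :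
    ∃ τ ∈ 𝒯, μ.real (B ∩ τ ⁻¹' A) ≤ θ * μ.real A * μ.real B := by
  obtain ⟨τ, hτ, hle⟩ := h A (toMeasurable μ B) hA (measurableSet_toMeasurable μ B) θ hθ
  refine ⟨τ, hτ, ENNReal.toReal_le_of_le_ofReal (by positivity) ?_⟩
  calc μ (B ∩ τ ⁻¹' A) ≤ μ (toMeasurable μ B ∩ τ ⁻¹' A) :=
        measure_mono (Set.inter_subset_inter_left _ (subset_toMeasurable μ B))
    _ ≤ ENNReal.ofReal θ * μ A * μ B := by rwa [measure_toMeasurable] at hle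
    _ = ENNReal.ofReal (θ * μ.real A * μ.real B) := by
        rw [ENNReal.ofReal_mul (by positivity), ENNReal.ofReal_mul (by positivity),
          ofReal_measureReal, ofReal_measureReal]

theorem exists_measureReal_biInter_preimage_le [IsProbabilityMeasure μ] {ι : Type*}
    [DecidableEq ι] (h : IsMixingFamily μ 𝒯) {C : ι → Set X} (hC : ∀ i, MeasurableSet (C i))
    {θ : ℝ} (hθ : 1 < θ) (s : Finset ι) :
    ∃ σ : ι → X → X, (∀ i, σ i ∈ 𝒯) ∧
      μ.real (⋂ i ∈ s, σ i ⁻¹' C i) ≤ θ ^ #s * ∏ i ∈ s, μ.real (C i) := by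
  induction s using Finset.induction_on with
  | empty =>
    obtain ⟨τ, hτ⟩ := h.nonempty
    exact ⟨fun _ => τ, fun _ => hτ, by simp⟩
  | insert a s ha ih =>
    obtain ⟨σ, hσ, hle⟩ := ih
    obtain ⟨τ, hτ, hτle⟩ :=
      h.exists_measureReal_inter_preimage_le (hC a) (⋂ i ∈ s, σ i ⁻¹' C i) hθ
    refine ⟨Function.update σ a τ, fun i => ?_, ?_⟩
    · rcases eq_or_ne i a with rfl | hi
      · simpa using hτ
      · simpa [Function.update_of_ne hi] using hσ i
    have hs : ⋂ i ∈ s, Function.update σ a τ i ⁻¹' C i = ⋂ i ∈ s, σ i ⁻¹' C i :=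
      Set.iInter₂_congr fun i hi => by rw [Function.update_of_ne (ne_of_mem_of_not_mem hi ha)]
    rw [set_biInter_insert, Function.update_self, hs, Set.inter_comm, card_insert_of_notMem ha,
      prod_insert ha]
    have hθ₀ : 0 ≤ θ := by linarith
    calc _ ≤ θ * μ.real (C a) * μ.real (⋂ i ∈ s, σ i ⁻¹' C i) := hτle
      _ ≤ θ * μ.real (C a) * (θ ^ #s * ∏ i ∈ s, μ.real (C i)) := by gcongr
      _ = _ := by ring

theorem exists_measureReal_biInter_Ico_compl_le [IsProbabilityMeasure μ]
    (h : IsMixingFamily μ 𝒯) {A : ℕ → Set X} (hA : ∀ n, MeasurableSet (A n))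
    (hdiv : ∑' n, μ (A n) = ⊤) (m : ℕ) {ε : ℝ} (hε : 0 < ε) :
    ∃ N, m < N ∧ ∃ σ : ℕ → X → X, (∀ k, σ k ∈ 𝒯) ∧
      μ.real (⋂ k ∈ Ico m N, σ k ⁻¹' (A k)ᶜ) ≤ ε := by
  obtain ⟨N, hsum, hmN⟩ := (((tendsto_sum_Ico_atTop_of_not_summable (fun _ => measureReal_nonneg)
    (not_summable_measureReal_of_tsum_eq_top hdiv) m).eventually_ge_atTop (1 - log ε)).and
    (eventually_gt_atTop m)).exists
  set n := #(Ico m N)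
  have hθ : 1 < exp (1 / (n + 1)) := one_lt_exp_iff.2 (by positivity)
  obtain ⟨σ, hσ, hle⟩ :=
    h.exists_measureReal_biInter_preimage_le (fun k => (hA k).compl) hθ (Ico m N)
  refine ⟨N, hmN, σ, hσ, ?_⟩
  have hθn : exp (1 / (n + 1)) ^ n ≤ exp 1 := by
    rw [← exp_nat_mul]
    gcongr
    rw [mul_one_div, div_le_one (by positivity)]
    linarith
  calc _ ≤ exp (1 / (n + 1)) ^ n * ∏ k ∈ Ico m N, (1 - μ.real (A k)) := by
        simpa only [probReal_compl_eq_one_sub (hA _)] using hle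
    _ ≤ exp 1 * exp (-∑ k ∈ Ico m N, μ.real (A k)) :=
        mul_le_mul hθn (prod_one_sub_le_exp_neg_sum _ fun k _ => measureReal_le_one)
          (prod_nonneg fun k _ => sub_nonneg.2 measureReal_le_one) (exp_pos 1).le
    _ ≤ ε := by
        rw [← exp_add, ← le_log_iff_exp_le hε]
        linarith

theorem exists_seq_measure_iInter_compl_eq_zero [IsProbabilityMeasure μ]
    (h : IsMixingFamily μ 𝒯) {A : ℕ → Set X} (hA : ∀ n, MeasurableSet (A n))
    (hdiv : ∑' n, μ (A n) = ⊤) :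
    ∃ τ : ℕ → X → X, (∀ n, τ n ∈ 𝒯) ∧ ∀ M, μ (⋂ n, ⋂ (_ : M ≤ n), τ n ⁻¹' (A n)ᶜ) = 0 := by
  choose N hN σ hσ hσN using fun m (j : ℕ) =>
    h.exists_measureReal_biInter_Ico_compl_le hA hdiv m (ε := 1 / (j + 1)) (by positivity)
  -- block `j` is `[b j, b (j + 1))`, on which `τ` agrees with `σ (b j) j`
  obtain ⟨b, hb_succ⟩ : ∃ b : ℕ → ℕ, ∀ j, b (j + 1) = N (b j) j :=
    ⟨fun j => Nat.rec 0 (fun j bj => N bj j) j, fun j => rfl⟩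
  have hb : StrictMono b := strictMono_nat_of_lt_succ fun j => hb_succ j ▸ hN (b j) j
  let block (n : ℕ) : ℕ := Nat.findGreatest (fun j : ℕ => b j ≤ n) n
  refine ⟨fun n => σ (b (block n)) (block n) n, fun n => hσ _ _ n, fun M => ?_⟩
  have hle : ∀ j ≥ M,
      μ.real (⋂ n, ⋂ (_ : M ≤ n), σ (b (block n)) (block n) n ⁻¹' (A n)ᶜ) ≤ 1 / (j + 1) := by
    intro j hj
    refine (measureReal_mono fun x hx => ?_).trans (hσN (b j) j)
    simp only [Set.mem_iInter, mem_Ico] at hx ⊢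
    intro k hk
    have hblock : block k = j := hb.findGreatest_le_eq hk.1 (hb_succ j ▸ hk.2)
    simpa only [hblock] using hx k (hj.trans (hb.le_apply.trans hk.1))
  rw [← measureReal_eq_zero_iff]
  exact le_antisymm (ge_of_tendsto tendsto_one_div_add_atTop_nhds_zero_nat
    (eventually_atTop.2 ⟨M, hle⟩)) measureReal_nonneg

end IsMixingFamily

theorem stmt_13_general {X : Type*} [MeasurableSpace X] (μ : Measure X) [IsProbabilityMeasure μ]
    (𝒯 : Set (X → X))
    (hmix : ∀ A B : Set X, MeasurableSet A → MeasurableSet B → ∀ θ : ℝ, 1 < θ →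
      ∃ τ ∈ 𝒯, μ (B ∩ τ ⁻¹' A) ≤ ENNReal.ofReal θ * μ A * μ B)
    (A : ℕ → Set X) (hA : ∀ n, MeasurableSet (A n))
    (hdiv : ∑' n, μ (A n) = ⊤) :
    ∃ τ : ℕ → X → X, (∀ n, τ n ∈ 𝒯) ∧
      ∀ M : ℕ, μ (⋃ n : ℕ, ⋃ (_ : M ≤ n), (τ n) ⁻¹' (A n)) = 1 := by
  obtain ⟨τ, hτ, htail⟩ := IsMixingFamily.exists_seq_measure_iInter_compl_eq_zero hmix hA hdiv
  refine ⟨τ, hτ, fun M => ?_⟩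
  rw [measure_congr (ae_eq_univ.2 ?_), measure_univ]
  simpa only [Set.compl_iUnion, Set.preimage_compl] using htail M

/-- Lemma 5.2: given an ergodic family `𝒯` of measure-preserving transformations of a
probability space satisfying the mixing property, and sets `Aₙ` with `∑ μ(Aₙ) = ∞`,
there are `τₙ ∈ 𝒯` so that `μ(⋃_{n ≥ M} τₙ⁻¹ Aₙ) = 1` for every `M`; that is,
`τₙ(x) ∈ Aₙ` for infinitely many `n`, for almost every `x`. -/
theorem stmt_13 {X : Type*} [MeasurableSpace X] (μ : Measure X) [IsProbabilityMeasure μ]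
    (𝒯 : Set (X → X))
    (hmp : ∀ τ ∈ 𝒯, MeasurePreserving τ μ μ)
    (herg : ∀ A : Set X, MeasurableSet A → (∀ τ ∈ 𝒯, τ ⁻¹' A = A) →
      μ A = 0 ∨ μ A = 1)
    (hmix : ∀ A B : Set X, MeasurableSet A → MeasurableSet B → ∀ θ : ℝ, 1 < θ →
      ∃ τ ∈ 𝒯, μ (B ∩ τ ⁻¹' A) ≤ ENNReal.ofReal θ * μ A * μ B)
    (A : ℕ → Set X) (hA : ∀ n, MeasurableSet (A n))
    (hdiv : ∑' n, μ (A n) = ⊤) :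
    ∃ τ : ℕ → X → X, (∀ n, τ n ∈ 𝒯) ∧
      ∀ M : ℕ, μ (⋃ n : ℕ, ⋃ (_ : M ≤ n), (τ n) ⁻¹' (A n)) = 1 :=
  stmt_13_general μ 𝒯 hmix A hA hdiv
end

section
/- Let $\Omega_\lambda = \{(x_1,x_2) \in [0,1)^2 : 0 < 2x_1 < x_2 < 1,\ x_1 x_2 < (2\lambda)^{-1/2}\}$ for $\lambda > 2$. Then the Lebesgue measure of $\Omega_\lambda$ satisfies $|\Omega_\lambda| \ge \frac{1}{4\sqrt{2}} \lambda^{-1/2} \ln(\lambda/2)$, and consequently $\sup_{\lambda > 2} \lambda^{1/2} |\Omega_\lambda| = \infty$. -/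
open MeasureTheory

/-- The region `Ω_λ = {(x₁,x₂) ∈ [0,1)² : 0 < 2x₁ < x₂ < 1, x₁x₂ < (2λ)^{-1/2}}`. -/
def Omega (lam : ℝ) : Set (ℝ × ℝ) :=
  {p : ℝ × ℝ | 0 ≤ p.1 ∧ p.1 < 1 ∧ 0 ≤ p.2 ∧ p.2 < 1 ∧
    0 < 2 * p.1 ∧ 2 * p.1 < p.2 ∧ p.2 < 1 ∧ p.1 * p.2 < (2 * lam) ^ (-(1:ℝ)/2)}

/-!
With `c = (2λ)^{-1/2}` and `t = √(2c) = (2/λ)^{1/4}`, the constraint `x₁x₂ < c` is the binding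
one for `x₂ > t`, so `Ω_λ` contains the region under the hyperbola `x₁ = c / x₂` over `t < x₂ < 1`.
Its area is `c log(1/t) = (1/(4√2)) λ^{-1/2} log(λ/2)`; after multiplying by `λ^{1/2}` only the
logarithm survives, which is unbounded.
-/

open Set Filter Real

theorem volume_regionBetween_zero_div {a b c : ℝ} (ha : 0 < a) (hab : a ≤ b) (hc : 0 ≤ c) :
    volume (regionBetween (fun _ => 0) (fun x => c / x) (Ioo a b)) =
      ENNReal.ofReal (c * log (b / a)) := by
  have hcont : ContinuousOn (fun x => c / x) (Icc a b) :=
    continuousOn_const.div continuousOn_id fun x hx => (ha.trans_le hx.1).ne'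
  rw [Measure.volume_eq_prod,
    volume_regionBetween_eq_integral (integrableOn_const measure_Ioo_lt_top.ne)
      (hcont.integrableOn_Icc.mono_set Ioo_subset_Icc_self) measurableSet_Ioo
      fun x hx => div_nonneg hc (ha.trans hx.1).le]
  rw [← integral_Ioc_eq_integral_Ioo, ← intervalIntegral.integral_of_le hab]
  simp_rw [Pi.sub_apply, sub_zero, div_eq_mul_inv c]
  rw [intervalIntegral.integral_const_mul, integral_inv_of_pos ha (ha.trans_le hab)]

theorem volume_Omega_ne_top (lam : ℝ) : volume (Omega lam) ≠ ⊤ := by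
  have hsub : Omega lam ⊆ Icc (0:ℝ) 1 ×ˢ Icc (0:ℝ) 1 :=
    fun p hp => ⟨⟨hp.1, hp.2.1.le⟩, ⟨hp.2.2.1, hp.2.2.2.1.le⟩⟩
  refine ne_top_of_le_ne_top ?_ (measure_mono (μ := volume) hsub)
  rw [Measure.volume_eq_prod, Measure.prod_prod, Real.volume_Icc]
  norm_num

theorem swap_preimage_regionBetween_subset_Omega {lam c t : ℝ} (hc : c ≤ (2 * lam) ^ (-(1:ℝ)/2))
    (ht : 0 < t) (htc : 2 * c ≤ t ^ 2) :
    Prod.swap ⁻¹' regionBetween (fun _ => 0) (fun y => c / y) (Ioo t 1) ⊆ Omega lam := by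
  rintro ⟨x, y⟩ ⟨⟨hty, hy1⟩, hx0, hxc⟩
  simp only [Prod.swap_prod_mk] at hty hy1 hx0 hxc
  have hy : 0 < y := ht.trans hty
  have hxy : x * y < c := (lt_div_iff₀ hy).1 hxc
  have hx2 : 2 * x < y := by
    refine lt_of_mul_lt_mul_right ?_ hy.le
    nlinarith
  exact ⟨hx0.le, by linarith, hy.le, hy1, by linarith, hx2, hy1, hxy.trans_le hc⟩

theorem ofReal_mul_log_inv_le_volume_Omega {lam c t : ℝ} (hc0 : 0 ≤ c)
    (hc : c ≤ (2 * lam) ^ (-(1:ℝ)/2)) (ht0 : 0 < t) (ht1 : t ≤ 1) (htc : 2 * c ≤ t ^ 2) :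
    ENNReal.ofReal (c * log (1 / t)) ≤ volume (Omega lam) := by
  have hmeas : MeasurableSet (regionBetween (fun _ => 0) (fun y => c / y) (Ioo t 1)) :=
    measurableSet_regionBetween measurable_const (by fun_prop) measurableSet_Ioo
  rw [← volume_regionBetween_zero_div ht0 ht1 hc0, Measure.volume_eq_prod,
    ← Measure.measurePreserving_swap.measure_preimage hmeas.nullMeasurableSet,
    ← Measure.volume_eq_prod]
  exact measure_mono (swap_preimage_regionBetween_subset_Omega hc ht0 htc)

theorem rpow_neg_half_eq_inv_sqrt {x : ℝ} (hx : 0 ≤ x) : x ^ (-(1:ℝ)/2) = (√x)⁻¹ := by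
  rw [neg_div, rpow_neg hx, ← sqrt_eq_rpow]

theorem lowerBound_le_volume_Omega {lam : ℝ} (hlam : 2 ≤ lam) :
    (1 / (4 * √2)) * lam ^ (-(1:ℝ)/2) * log (lam / 2) ≤ (volume (Omega lam)).toReal := by
  have hlam0 : 0 < lam := by linarith
  set c := (2 * lam) ^ (-(1:ℝ)/2) with hc_def
  have hc : c = (√2)⁻¹ * (√lam)⁻¹ := by
    rw [hc_def, rpow_neg_half_eq_inv_sqrt (by positivity), sqrt_mul zero_le_two, mul_inv]
  have hc0 : 0 < c := by rw [hc]; positivity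
  have hc_half : c ≤ 1 / 2 := by
    rw [hc_def, rpow_neg_half_eq_inv_sqrt (by positivity), one_div]
    refine inv_anti₀ two_pos (le_sqrt_of_sq_le ?_)
    linarith
  have ht0 : 0 < √(2 * c) := sqrt_pos.2 (by positivity)
  have ht1 : √(2 * c) ≤ 1 := sqrt_le_one.2 (by linarith)
  have hlog : log (1 / √(2 * c)) = log (lam / 2) / 4 := by
    rw [one_div, log_inv, log_sqrt (by positivity), hc, log_mul two_ne_zero (by positivity),
      log_mul (by positivity) (by positivity), log_inv, log_inv, log_sqrt zero_le_two,
      log_sqrt hlam0.le, log_div hlam0.ne' two_ne_zero]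
    ring
  have key := ofReal_mul_log_inv_le_volume_Omega hc0.le le_rfl ht0 ht1 (sq_sqrt (by positivity)).ge
  rw [hlog] at key
  rw [← ENNReal.ofReal_le_iff_le_toReal (volume_Omega_ne_top lam)]
  convert key using 2
  rw [hc, rpow_neg_half_eq_inv_sqrt hlam0.le]
  ring

/-- For `λ > 2`, the measure of `Ω_λ` is at least
`(1/(4√2)) λ^{-1/2} ln(λ/2)`; consequently `sup_{λ>2} λ^{1/2} |Ω_λ| = ∞`. -/
theorem stmt_17 :
    (∀ lam : ℝ, 2 < lam →
      (1 / (4 * Real.sqrt 2)) * lam ^ (-(1:ℝ)/2) * Real.log (lam / 2)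
        ≤ (volume (Omega lam)).toReal) ∧
    (∀ C : ℝ, ∃ lam : ℝ, 2 < lam ∧
      C < lam ^ ((1:ℝ)/2) * (volume (Omega lam)).toReal) := by
  refine ⟨fun lam hlam => lowerBound_le_volume_Omega hlam.le, fun C => ?_⟩
  have hscaled : ∀ lam : ℝ, 0 < lam →
      lam ^ ((1:ℝ)/2) * ((1 / (4 * √2)) * lam ^ (-(1:ℝ)/2) * log (lam / 2))
        = log (lam / 2) / (4 * √2) := by
    intro lam hlam
    rw [rpow_neg_half_eq_inv_sqrt hlam.le, ← sqrt_eq_rpow]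
    field_simp [(sqrt_pos.2 hlam).ne']
  have hunbounded : Tendsto (fun lam : ℝ => log (lam / 2) / (4 * √2)) atTop atTop :=
    (tendsto_log_atTop.comp (tendsto_id.atTop_div_const two_pos)).atTop_div_const (by positivity)
  obtain ⟨lam, hlam, hC⟩ :=
    ((eventually_gt_atTop 2).and (hunbounded.eventually_gt_atTop C)).exists
  refine ⟨lam, hlam, hC.trans_le ?_⟩
  rw [← hscaled lam (by linarith)]
  gcongr
  exact lowerBound_le_volume_Omega hlam.le
end
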